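/- Let B be a balanced bipartite graph on 6 vertices (vertex classes of size 3 each). If B has exactly 6 edges, then either B contains a perfect matching or B is isomorphic to B_{033}. -/
import Mathlib


open Finset

/-- The bipartite graph `B₀₃₃` on vertex classes `Fin 3` and `Fin 3`: two vertices of the
first class (those `≠ 0`) are joined to all three vertices of the second class
(degree sequences `0,3,3` and `2,2,2`). -/
def B033 : Finset (Fin 3 × Fin 3) := Finset.univ.filter fun p => p.1 ≠ 0

/-- Isomorphism of a bipartite graph with classes `α`, `β` and edge set `E` to a bipartite
graph on `Fin 3` and `Fin 3` with edge set `E'` (the isomorphism may also swap the two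
vertex classes). -/
def BipIsoTo {α β : Type*} (E : Finset (α × β)) (E' : Finset (Fin 3 × Fin 3)) : Prop :=
  (∃ (g : α ≃ Fin 3) (h : β ≃ Fin 3), ∀ a b, (a, b) ∈ E ↔ (g a, h b) ∈ E') ∨
  (∃ (g : β ≃ Fin 3) (h : α ≃ Fin 3), ∀ a b, (a, b) ∈ E ↔ (g b, h a) ∈ E')

set_option maxRecDepth 10000 in
lemma key_fin3 : ∀ E' : Finset (Fin 3 × Fin 3), E'.card = 6 →
    (∃ f : Fin 3 ≃ Fin 3, ∀ a, (a, f a) ∈ E') ∨ BipIsoTo E' B033 := by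
  unfold BipIsoTo B033
  decide

/-- A balanced bipartite graph on `3 + 3` vertices with exactly 6 edges
either contains a perfect matching or is isomorphic to `B₀₃₃`. -/
theorem stmt_6 (α β : Type) [Fintype α] [Fintype β] [DecidableEq α] [DecidableEq β]
    (hα : Fintype.card α = 3) (hβ : Fintype.card β = 3)
    (E : Finset (α × β)) (hE : E.card = 6) :
    (∃ f : α ≃ β, ∀ a, (a, f a) ∈ E) ∨ BipIsoTo E B033 := by
  obtain ⟨g⟩ : Nonempty (α ≃ Fin 3) := ⟨Fintype.equivFinOfCardEq hα⟩
  obtain ⟨h⟩ : Nonempty (β ≃ Fin 3) := ⟨Fintype.equivFinOfCardEq hβ⟩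
  set E' : Finset (Fin 3 × Fin 3) := E.image (Prod.map g h) with hE'
  have hmem : ∀ a b, (a, b) ∈ E ↔ (g a, h b) ∈ E' := by
    intro a b
    constructor
    · intro hab
      exact Finset.mem_image_of_mem _ hab
    · intro hab
      obtain ⟨⟨x, y⟩, hxy, heq⟩ := Finset.mem_image.1 hab
      obtain ⟨h1, h2⟩ := Prod.mk.injEq .. ▸ heq
      rwa [← g.injective h1, ← h.injective h2]
  have hcard : E'.card = 6 := by
    rw [hE', Finset.card_image_of_injective _ _, hE]
    intro p q hpq
    obtain ⟨h1, h2⟩ := Prod.mk.injEq .. ▸ hpq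
    exact Prod.ext (g.injective h1) (h.injective h2)
  rcases key_fin3 E' hcard with ⟨f', hf'⟩ | hiso
  · left
    refine ⟨g.trans (f'.trans h.symm), fun a => ?_⟩
    rw [hmem]
    simpa using hf' (g a)
  · right
    rcases hiso with ⟨g', h', hgh⟩ | ⟨g', h', hgh⟩
    · exact Or.inl ⟨g.trans g', h.trans h', fun a b => (hmem a b).trans (hgh (g a) (h b))⟩
    · exact Or.inr ⟨h.trans g', g.trans h', fun a b => (hmem a b).trans (hgh (g a) (h b))⟩
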